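/- Let μ⁻, μ⁺ be probability measures on ℝ^d with compact supports X⁻, X⁺ and let c : X⁻ × X⁺ → ℝ be Lipschitz with respect to the norm ‖(x,y)‖ = max(|x|,|y|). Assume there are constants C > 0 and k⁻, k⁺ ≥ 0 such that for every δ ∈ (0,1), X⁻ can be covered by at most C·δ^{−k⁻} sets of diameter at most δ, and X⁺ by at most C·δ^{−k⁺} such sets. Then there exists M ≥ 0 such that for every ε ∈ (0,1): v_ε ≤ v_0 + min(k⁻,k⁺)·ε·log(1/ε) + M·ε. -/

import Mathlib

open MeasureTheory Real Set Filter Classical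
open scoped ENNReal NNReal Topology

noncomputable section

/-- Relative entropy (Kullback–Leibler divergence) `Ent(γ | q)`, with values in `EReal`:
it equals `∫ ρ log ρ dq` if `γ = ρ·q` (with `ρ log ρ` integrable) and `+∞` otherwise. -/
def Ent {α : Type*} [MeasurableSpace α] (γ q : Measure α) : EReal :=
  if γ ≪ q ∧ Integrable (fun x => ((γ.rnDeriv q) x).toReal * Real.log ((γ.rnDeriv q) x).toReal) q
  then ((∫ x, ((γ.rnDeriv q) x).toReal * Real.log ((γ.rnDeriv q) x).toReal ∂q : ℝ) : EReal)
  else ⊤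

/-- Entropic optimal transport cost
`v_ε = inf { ∫ c dγ + ε Ent(γ | μ⁻ ⊗ μ⁺) : γ coupling of μ⁻ and μ⁺ }`. -/
def entCost {α β : Type*} [MeasurableSpace α] [MeasurableSpace β]
    (μm : Measure α) (μp : Measure β) (c : α × β → ℝ) (ε : ℝ) : EReal :=
  sInf {v : EReal | ∃ γ : Measure (α × β), IsProbabilityMeasure γ ∧ γ.fst = μm ∧ γ.snd = μp ∧
    v = ((∫ p, c p ∂γ : ℝ) : EReal) + (ε : EReal) * Ent γ (μm.prod μp)}

/-- Support of a measure: the set of points all of whose open neighbourhoods have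
positive measure. -/
def msupport {α : Type*} [TopologicalSpace α] [MeasurableSpace α] (μ : Measure α) : Set α :=
  {x | ∀ U : Set α, IsOpen U → x ∈ U → μ U ≠ 0}

/-!
Fix a coupling `γ₀` and partitions of the two supports into `n` and `m` cells of diameter at
most `ε`. Replacing `γ₀` on every block `Pᵢ × Qⱼ` by the product of the conditioned marginals,
with the same mass `γ₀(Pᵢ × Qⱼ)`, gives again a coupling. Since `c` oscillates by at most `Lε`
on each block, its cost exceeds that of `γ₀` by at most `2Lε`; its density with respect to
`μ⁻ ⊗ μ⁺` is constant on blocks, so its entropy is the discrete mutual information of the block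
masses, which is at most `min (log n) (log m) ≤ log C + min(k⁻, k⁺) log (1/ε)`.
-/

lemma Set.pairwise_disjoint_prod {α β ι κ : Type*} {P : ι → Set α} {Q : κ → Set β}
    (hP : Pairwise (Function.onFun Disjoint P)) (hQ : Pairwise (Function.onFun Disjoint Q)) :
    Pairwise (Function.onFun Disjoint fun p : ι × κ => P p.1 ×ˢ Q p.2) := by
  intro p q hpq
  rw [Function.onFun, Set.disjoint_prod]
  by_cases h : p.1 = q.1
  · exact Or.inr (hQ fun h' => hpq (Prod.ext h h'))
  · exact Or.inl (hP h)

section IndicatorSums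

variable {ι Ω : Type*} [Fintype ι] {S : ι → Set Ω}

lemma sum_indicator_const_of_mem {M : Type*} [AddCommMonoid M]
    (hd : Pairwise (Function.onFun Disjoint S)) (w : ι → M) {x : Ω} {i : ι} (hx : x ∈ S i) :
    ∑ j, (S j).indicator (fun _ => w j) x = w i :=
  (Finset.sum_eq_single i (fun j _ hji => indicator_of_notMem
    (fun hxj => disjoint_left.1 (hd hji) hxj hx) _) (by simp)).trans (indicator_of_mem hx _)

lemma map_sum_indicator_const {M N : Type*} [AddCommMonoid M] [AddCommMonoid N]
    (hd : Pairwise (Function.onFun Disjoint S)) (w : ι → M) {φ : M → N} (hφ : φ 0 = 0) (x : Ω) :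
    φ (∑ i, (S i).indicator (fun _ => w i) x) = ∑ i, (S i).indicator (fun _ => φ (w i)) x := by
  by_cases hx : ∃ i, x ∈ S i
  · obtain ⟨i, hi⟩ := hx
    rw [sum_indicator_const_of_mem hd w hi, sum_indicator_const_of_mem hd _ hi]
  · push Not at hx
    simp [indicator_of_notMem (hx _), hφ]

end IndicatorSums

namespace Real

variable {ι κ : Type*} [Fintype ι] [Fintype κ]

lemma sum_negMulLog_le_log_card {r : ι → ℝ} (hr : ∀ i, 0 ≤ r i) (h1 : ∑ i, r i = 1) :
    ∑ i, negMulLog (r i) ≤ log (Fintype.card ι) := by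
  have hn : (0 : ℝ) < Fintype.card ι := by
    have : Nonempty ι := by
      by_contra h
      simp [not_nonempty_iff.1 h] at h1
    exact_mod_cast Fintype.card_pos
  have hJensen := concaveOn_negMulLog.le_map_sum (t := Finset.univ)
    (w := fun _ => (Fintype.card ι : ℝ)⁻¹) (p := r) (fun _ _ => by positivity)
    (by simp [Finset.card_univ, hn.ne']) (fun i _ => mem_Ici.2 (hr i))
  simp only [smul_eq_mul, ← Finset.mul_sum, h1, mul_one] at hJensen
  rwa [negMulLog, log_inv, neg_mul_neg, inv_mul_le_iff₀ hn, ← mul_assoc, mul_inv_cancel₀ hn.ne',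
    one_mul] at hJensen

/-- The mutual information of a joint distribution on `ι × κ` is at most `log |ι|`. -/
lemma sum_mul_log_div_le_log_card_left {a : ι × κ → ℝ} (ha : ∀ p, 0 ≤ a p)
    (h1 : ∑ p, a p = 1) :
    ∑ p, a p * log (a p / ((∑ j, a (p.1, j)) * ∑ i, a (i, p.2))) ≤ log (Fintype.card ι) := by
  have hterm : ∀ p : ι × κ, a p * log (a p / ((∑ j, a (p.1, j)) * ∑ i, a (i, p.2)))
      ≤ a p * log (∑ j, a (p.1, j))⁻¹ := by
    intro p
    rcases (ha p).eq_or_lt with h | h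
    · simp [← h]
    have hr : a p ≤ ∑ j, a (p.1, j) :=
      Finset.single_le_sum (fun j _ => ha (p.1, j)) (Finset.mem_univ p.2)
    have hs : a p ≤ ∑ i, a (i, p.2) :=
      Finset.single_le_sum (fun i _ => ha (i, p.2)) (Finset.mem_univ p.1)
    have hr₀ : 0 < ∑ j, a (p.1, j) := h.trans_le hr
    have hs₀ : 0 < ∑ i, a (i, p.2) := h.trans_le hs
    refine mul_le_mul_of_nonneg_left (log_le_log (by positivity) ?_) h.le
    calc a p / ((∑ j, a (p.1, j)) * ∑ i, a (i, p.2))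
        = (∑ j, a (p.1, j))⁻¹ * (a p / ∑ i, a (i, p.2)) := by field_simp
      _ ≤ (∑ j, a (p.1, j))⁻¹ * 1 :=
        mul_le_mul_of_nonneg_left (div_le_one_of_le₀ hs hs₀.le) (by positivity)
      _ = (∑ j, a (p.1, j))⁻¹ := mul_one _
  calc _ ≤ ∑ p : ι × κ, a p * log (∑ j, a (p.1, j))⁻¹ := Finset.sum_le_sum fun p _ => hterm p
    _ = ∑ i, negMulLog (∑ j, a (i, j)) := by
      rw [Fintype.sum_prod_type]
      refine Finset.sum_congr rfl fun i _ => ?_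
      dsimp only
      rw [← Finset.sum_mul, log_inv, negMulLog]
      ring
    _ ≤ log (Fintype.card ι) :=
      sum_negMulLog_le_log_card (fun i => Finset.sum_nonneg fun j _ => ha (i, j))
        (by rw [← Fintype.sum_prod_type, h1])

lemma sum_mul_log_div_le_log_card_right {a : ι × κ → ℝ} (ha : ∀ p, 0 ≤ a p)
    (h1 : ∑ p, a p = 1) :
    ∑ p, a p * log (a p / ((∑ j, a (p.1, j)) * ∑ i, a (i, p.2))) ≤ log (Fintype.card κ) := by
  have hswap := sum_mul_log_div_le_log_card_left (a := fun q : κ × ι => a q.swap)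
    (fun q => ha q.swap)
    (by rw [← h1]; exact Fintype.sum_equiv (Equiv.prodComm κ ι) _ _ fun _ => rfl)
  rw [← Fintype.sum_equiv (Equiv.prodComm κ ι) _ _ fun _ => rfl]
  simp only [Equiv.prodComm_apply, Prod.fst_swap, Prod.snd_swap, Prod.swap_prod_mk] at hswap ⊢
  simpa only [mul_comm] using hswap

lemma log_le_log_add_mul_log_one_div {n C ε k : ℝ} (hn : 0 < n) (hε : 0 < ε)
    (h : n ≤ C * ε ^ (-k)) : log n ≤ log C + k * log (1 / ε) := by
  have hC : 0 < C := pos_of_mul_pos_left (hn.trans_le h) (rpow_pos_of_pos hε _).le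
  calc log n ≤ log (C * ε ^ (-k)) := log_le_log hn h
    _ = log C + k * log (1 / ε) := by
      rw [log_mul hC.ne' (rpow_pos_of_pos hε _).ne', log_rpow hε, one_div, log_inv]
      ring

lemma min_log_le_log_add_min_mul_log_one_div {n m C ε k k' : ℝ} (hn₀ : 0 < n) (hm₀ : 0 < m)
    (hε : ε ∈ Ioo 0 1) (hn : n ≤ C * ε ^ (-k)) (hm : m ≤ C * ε ^ (-k')) :
    min (log n) (log m) ≤ log C + min k k' * log (1 / ε) := by
  rw [min_mul_of_nonneg _ _ (log_nonneg (one_le_one_div hε.1 hε.2.le)), ← min_add_add_left]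
  exact min_le_min (log_le_log_add_mul_log_one_div hn₀ hε.1 hn)
    (log_le_log_add_mul_log_one_div hm₀ hε.1 hm)

end Real

namespace MeasureTheory

open Function ProbabilityTheory

variable {α β Ω ι κ : Type*} [MeasurableSpace α] [MeasurableSpace β] [MeasurableSpace Ω]

structure IsAEPartition (μ : Measure Ω) (S : ι → Set Ω) : Prop where
  measurableSet : ∀ i, MeasurableSet (S i)
  pairwise_disjoint : Pairwise (Disjoint on S)
  ae_mem_iUnion : ∀ᵐ x ∂μ, x ∈ ⋃ i, S i

namespace IsAEPartition

variable {μ : Measure Ω} {S : ι → Set Ω}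

lemma sum_restrict [Fintype ι] (h : IsAEPartition μ S) : ∑ i, μ.restrict (S i) = μ := by
  rw [← Measure.sum_fintype, ← Measure.restrict_iUnion h.pairwise_disjoint h.measurableSet,
    Measure.restrict_eq_self_of_ae_mem h.ae_mem_iUnion]

lemma sum_measure_inter [Fintype ι] (h : IsAEPartition μ S) (T : Set Ω) :
    ∑ i, μ (T ∩ S i) = μ T := by
  conv_rhs => rw [← h.sum_restrict]
  simp only [Measure.coe_finsetSum, Finset.sum_apply, Measure.restrict_apply' (h.measurableSet _)]

lemma sum_measureReal [Fintype ι] [IsFiniteMeasure μ] (h : IsAEPartition μ S) :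
    ∑ i, μ.real (S i) = μ.real univ := by
  simp only [measureReal_def, ← ENNReal.toReal_sum fun i _ => measure_ne_top μ (S i),
    ← h.sum_measure_inter univ, univ_inter]

lemma integral_eq_sum [Fintype ι] (h : IsAEPartition μ S) {f : Ω → ℝ} (hf : Integrable f μ) :
    ∫ x, f x ∂μ = ∑ i, ∫ x in S i, f x ∂μ := by
  rw [← integral_iUnion_fintype h.measurableSet h.pairwise_disjoint fun i => hf.integrableOn,
    Measure.restrict_eq_self_of_ae_mem h.ae_mem_iUnion]

lemma preimage {μ : Measure α} {f : α → Ω} (hf : Measurable f) (h : IsAEPartition (μ.map f) S) :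
    IsAEPartition μ fun i => f ⁻¹' S i where
  measurableSet i := hf (h.measurableSet i)
  pairwise_disjoint _ _ hij := (h.pairwise_disjoint hij).preimage f
  ae_mem_iUnion := by
    rw [← preimage_iUnion]
    exact ae_of_ae_map hf.aemeasurable h.ae_mem_iUnion

lemma prod {γ : Measure (α × β)} {P : ι → Set α} {Q : κ → Set β} (hP : IsAEPartition γ.fst P)
    (hQ : IsAEPartition γ.snd Q) : IsAEPartition γ fun p : ι × κ => P p.1 ×ˢ Q p.2 where
  measurableSet p := (hP.measurableSet p.1).prod (hQ.measurableSet p.2)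
  pairwise_disjoint := Set.pairwise_disjoint_prod hP.pairwise_disjoint hQ.pairwise_disjoint
  ae_mem_iUnion := by
    filter_upwards [(hP.preimage measurable_fst).ae_mem_iUnion,
      (hQ.preimage measurable_snd).ae_mem_iUnion] with z hz₁ hz₂
    obtain ⟨i, hi⟩ := mem_iUnion.1 hz₁
    obtain ⟨j, hj⟩ := mem_iUnion.1 hz₂
    exact mem_iUnion.2 ⟨(i, j), hi, hj⟩

lemma cond_eq_zero (h : IsAEPartition μ S) {i j : ι} (hij : i ≠ j) : μ[S j | S i] = 0 := by
  rw [cond_apply (h.measurableSet i), (h.pairwise_disjoint hij).inter_eq, measure_empty, mul_zero]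

end IsAEPartition

lemma exists_isAEPartition_of_subset_iUnion {X : Type*} [PseudoEMetricSpace X]
    [MeasurableSpace X] [OpensMeasurableSpace X] [LinearOrder ι] [LocallyFiniteOrderBot ι]
    {μ : Measure X} {K : Set X} (hK : MeasurableSet K) (hμK : ∀ᵐ x ∂μ, x ∈ K) {A : ι → Set X}
    (hA : K ⊆ ⋃ i, A i) :
    ∃ P : ι → Set X, IsAEPartition μ P ∧
      ∀ i, P i ⊆ K ∧ Metric.ediam (P i) ≤ Metric.ediam (A i) := by
  -- closures make the cells measurable without enlarging their diameters
  have hm : ∀ i, MeasurableSet (K ∩ closure (A i)) := fun i =>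
    hK.inter isClosed_closure.measurableSet
  refine ⟨disjointed fun i => K ∩ closure (A i), ⟨fun i => ?_, ?_, ?_⟩, fun i => ⟨?_, ?_⟩⟩
  · exact disjointedRec (f := fun i => K ∩ closure (A i)) (p := MeasurableSet)
      (fun _ j ht => ht.diff (hm j)) (hm i)
  · exact disjoint_disjointed fun i => K ∩ closure (A i)
  · filter_upwards [hμK] with x hx
    obtain ⟨i, hi⟩ := mem_iUnion.1 (hA hx)
    rw [iUnion_disjointed]
    exact mem_iUnion.2 ⟨i, hx, subset_closure hi⟩
  · exact (disjointed_subset _ i).trans inter_subset_left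
  · rw [← Metric.ediam_closure (A i)]
    exact Metric.ediam_mono ((disjointed_subset _ i).trans inter_subset_right)

lemma Measure.sum_measure_prod_right [Fintype κ] {γ : Measure (α × β)} {Q : κ → Set β}
    (hQ : IsAEPartition γ.snd Q) {A : Set α} (hA : MeasurableSet A) :
    ∑ j, γ (A ×ˢ Q j) = γ.fst A := by
  rw [Measure.fst_apply hA, ← (hQ.preimage measurable_snd).sum_measure_inter]
  rfl

lemma Measure.sum_measure_prod_left [Fintype ι] {γ : Measure (α × β)} {P : ι → Set α}
    (hP : IsAEPartition γ.fst P) {B : Set β} (hB : MeasurableSet B) :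
    ∑ i, γ (P i ×ˢ B) = γ.snd B := by
  rw [Measure.snd_apply hB, ← (hP.preimage measurable_fst).sum_measure_inter]
  exact Finset.sum_congr rfl fun i _ => by rw [inter_comm]; rfl

lemma isProbabilityMeasure_of_fst_eq {μ : Measure α} [IsProbabilityMeasure μ]
    {γ : Measure (α × β)} (h : γ.fst = μ) : IsProbabilityMeasure γ :=
  ⟨by rw [← Measure.fst_univ, h, measure_univ]⟩

lemma mul_cond_eq_self {μ : Measure Ω} [IsFiniteMeasure μ] {s t : Set Ω} {a : ℝ≥0∞}
    (ha : a ≤ μ s) (hs : MeasurableSet s) (hst : s ⊆ t) : a * μ[t | s] = a := by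
  rw [cond_apply hs, inter_eq_left.2 hst]
  rcases eq_or_ne (μ s) 0 with h | h
  · simp [nonpos_iff_eq_zero.1 (h ▸ ha)]
  · rw [ENNReal.inv_mul_cancel h (measure_ne_top μ s), mul_one]

section StepDensity

variable [Fintype ι] {q : Measure Ω} {S : ι → Set Ω}

lemma withDensity_sum_indicator_const (hS : ∀ i, MeasurableSet (S i)) (w : ι → ℝ≥0∞) :
    q.withDensity (fun x => ∑ i, (S i).indicator (fun _ => w i) x)
      = ∑ i, w i • q.restrict (S i) := by
  have hsum : (fun x => ∑ i, (S i).indicator (fun _ => w i) x)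
      = ∑' i, (S i).indicator fun _ => w i := by
    ext x
    rw [tsum_fintype, Finset.sum_apply]
  rw [hsum, withDensity_tsum fun i => measurable_const.indicator (hS i), Measure.sum_fintype]
  simp only [withDensity_indicator (hS _), withDensity_const]

lemma Ent_withDensity_sum_indicator [IsFiniteMeasure q] (hS : ∀ i, MeasurableSet (S i))
    (hd : Pairwise (Disjoint on S)) (w : ι → ℝ≥0∞) :
    Ent (q.withDensity fun x => ∑ i, (S i).indicator (fun _ => w i) x) q
      = ((∑ i, (w i).toReal * log (w i).toReal * q.real (S i) : ℝ) : EReal) := by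
  set f := fun x => ∑ i, (S i).indicator (fun _ => w i) x
  have hf : Measurable f := Finset.measurable_sum _ fun i _ => measurable_const.indicator (hS i)
  have hint : ∀ i, Integrable ((S i).indicator fun _ => (w i).toReal * log (w i).toReal) q :=
    fun i => (integrable_const _).indicator (hS i)
  have hae : (fun x => ((q.withDensity f).rnDeriv q x).toReal
      * log ((q.withDensity f).rnDeriv q x).toReal)
      =ᵐ[q] fun x => ∑ i, (S i).indicator (fun _ => (w i).toReal * log (w i).toReal) x := by
    filter_upwards [Measure.rnDeriv_withDensity q hf] with x hx
    rw [hx]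
    exact map_sum_indicator_const hd w (φ := fun t => t.toReal * log t.toReal) (by simp) x
  rw [Ent, if_pos ⟨withDensity_absolutelyContinuous _ _,
    (integrable_finsetSum _ fun i _ => hint i).congr hae.symm⟩, integral_congr_ae hae,
    integral_finsetSum _ fun i _ => hint i]
  simp only [integral_indicator_const _ (hS _), smul_eq_mul, mul_comm]

end StepDensity

section BlockApprox

variable [Fintype ι] [Fintype κ]

def blockApprox (γ : Measure (α × β)) (μ : Measure α) (ν : Measure β) (P : ι → Set α)
    (Q : κ → Set β) : Measure (α × β) :=
  ∑ p : ι × κ, γ (P p.1 ×ˢ Q p.2) • (μ[|P p.1]).prod (ν[|Q p.2])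

variable {γ : Measure (α × β)} {μ : Measure α} {ν : Measure β} {P : ι → Set α} {Q : κ → Set β}

lemma blockApprox_apply_prod [SFinite ν] (S : Set α) (T : Set β) :
    blockApprox γ μ ν P Q (S ×ˢ T)
      = ∑ p : ι × κ, γ (P p.1 ×ˢ Q p.2) * (μ[S | P p.1] * ν[T | Q p.2]) := by
  simp only [blockApprox, Measure.coe_finsetSum, Finset.sum_apply, Measure.smul_apply,
    Measure.prod_prod, smul_eq_mul]

variable [IsFiniteMeasure μ] [IsFiniteMeasure ν] (hγ₁ : γ.fst = μ)
  (hγ₂ : γ.snd = ν) (hP : IsAEPartition μ P) (hQ : IsAEPartition ν Q)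
include hγ₁ hγ₂ hP hQ

lemma fst_blockApprox : (blockApprox γ μ ν P Q).fst = μ := by
  ext S hS
  have hcell : ∀ p : ι × κ, γ (P p.1 ×ˢ Q p.2) * (μ[S | P p.1] * ν[univ | Q p.2])
      = γ (P p.1 ×ˢ Q p.2) * μ[S | P p.1] := fun p => by
    rw [mul_left_comm, mul_cond_eq_self _ (hQ.measurableSet p.2) (subset_univ _), mul_comm]
    rw [← hγ₂, Measure.snd_apply (hQ.measurableSet p.2)]
    exact measure_mono fun z hz => hz.2
  rw [Measure.fst_apply hS, ← prod_univ, blockApprox_apply_prod,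
    Finset.sum_congr rfl fun p _ => hcell p, Fintype.sum_prod_type, ← hP.sum_measure_inter S]
  refine Finset.sum_congr rfl fun i _ => ?_
  dsimp only
  rw [← Finset.sum_mul, Measure.sum_measure_prod_right (hγ₂ ▸ hQ) (hP.measurableSet i), hγ₁,
    mul_comm, cond_mul_eq_inter (hP.measurableSet i), inter_comm]

lemma snd_blockApprox : (blockApprox γ μ ν P Q).snd = ν := by
  ext T hT
  have hcell : ∀ p : ι × κ, γ (P p.1 ×ˢ Q p.2) * (μ[univ | P p.1] * ν[T | Q p.2])
      = γ (P p.1 ×ˢ Q p.2) * ν[T | Q p.2] := fun p => by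
    rw [← mul_assoc, mul_cond_eq_self _ (hP.measurableSet p.1) (subset_univ _)]
    rw [← hγ₁, Measure.fst_apply (hP.measurableSet p.1)]
    exact measure_mono fun z hz => hz.1
  rw [Measure.snd_apply hT, ← univ_prod, blockApprox_apply_prod,
    Finset.sum_congr rfl fun p _ => hcell p, Fintype.sum_prod_type, Finset.sum_comm,
    ← hQ.sum_measure_inter T]
  refine Finset.sum_congr rfl fun j _ => ?_
  dsimp only
  rw [← Finset.sum_mul, Measure.sum_measure_prod_left (hγ₁ ▸ hP) (hQ.measurableSet j), hγ₂,
    mul_comm, cond_mul_eq_inter (hQ.measurableSet j), inter_comm]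

lemma blockApprox_apply_cell (p : ι × κ) :
    blockApprox γ μ ν P Q (P p.1 ×ˢ Q p.2) = γ (P p.1 ×ˢ Q p.2) := by
  rw [blockApprox_apply_prod, Finset.sum_eq_single p]
  · rw [← mul_assoc, mul_cond_eq_self _ (hP.measurableSet p.1) subset_rfl,
      mul_cond_eq_self _ (hQ.measurableSet p.2) subset_rfl]
    · rw [← hγ₂, Measure.snd_apply (hQ.measurableSet p.2)]
      exact measure_mono fun z hz => hz.2
    · rw [← hγ₁, Measure.fst_apply (hP.measurableSet p.1)]
      exact measure_mono fun z hz => hz.1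
  · intro q _ hqp
    by_cases h : q.1 = p.1
    · rw [hQ.cond_eq_zero fun h' => hqp (Prod.ext h h'), mul_zero, mul_zero]
    · rw [hP.cond_eq_zero h, zero_mul, mul_zero]
  · simp

omit hγ₁ hγ₂

lemma blockApprox_eq_withDensity : blockApprox γ μ ν P Q = (μ.prod ν).withDensity fun z =>
    ∑ p : ι × κ, (P p.1 ×ˢ Q p.2).indicator
      (fun _ => γ (P p.1 ×ˢ Q p.2) * ((μ (P p.1))⁻¹ * (ν (Q p.2))⁻¹)) z := by
  rw [blockApprox, eq_comm]
  refine (withDensity_sum_indicator_const (S := fun p : ι × κ => P p.1 ×ˢ Q p.2)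
    (fun p => (hP.measurableSet p.1).prod (hQ.measurableSet p.2)) _).trans
    (Finset.sum_congr rfl fun p _ => ?_)
  rw [← Measure.prod_restrict, ProbabilityTheory.cond, ProbabilityTheory.cond,
    Measure.prod_smul_left, Measure.prod_smul_right, smul_smul, smul_smul, mul_assoc]

lemma Ent_blockApprox : Ent (blockApprox γ μ ν P Q) (μ.prod ν) = ((∑ p : ι × κ,
    γ.real (P p.1 ×ˢ Q p.2) * log (γ.real (P p.1 ×ˢ Q p.2) / (μ.real (P p.1) * ν.real (Q p.2)))
    : ℝ) : EReal) := by
  rw [blockApprox_eq_withDensity hP hQ]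
  refine (Ent_withDensity_sum_indicator (S := fun p : ι × κ => P p.1 ×ˢ Q p.2)
    (fun p => (hP.measurableSet p.1).prod (hQ.measurableSet p.2))
    (Set.pairwise_disjoint_prod hP.pairwise_disjoint hQ.pairwise_disjoint) _).trans ?_
  congr 1
  refine Finset.sum_congr rfl fun p _ => ?_
  simp only [measureReal_prod_prod, ENNReal.toReal_mul, ENNReal.toReal_inv, ← measureReal_def]
  rw [← mul_inv, ← div_eq_mul_inv]
  rcases eq_or_ne (μ.real (P p.1) * ν.real (Q p.2)) 0 with h | h
  · simp [h]
  · rw [mul_right_comm, div_mul_cancel₀ _ h]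

end BlockApprox

lemma abs_setIntegral_sub_mul_le {γ : Measure Ω} [IsFiniteMeasure γ] {s : Set Ω} {f : Ω → ℝ}
    (hf : IntegrableOn f s γ) {y η : ℝ} (h : ∀ x ∈ s, |f x - y| ≤ η) :
    |∫ x in s, f x ∂γ - y * γ.real s| ≤ η * γ.real s := by
  rw [mul_comm y, ← smul_eq_mul, ← setIntegral_const,
    ← integral_sub hf (integrableOn_const (measure_ne_top γ s))]
  exact norm_setIntegral_le_of_norm_le_const (f := fun x => f x - y) (measure_lt_top γ s) h

lemma integral_le_integral_add_of_forall_abs_sub_le [Fintype ι] {γ₀ γ₁ : Measure Ω}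
    [IsFiniteMeasure γ₀] [IsFiniteMeasure γ₁] {S : ι → Set Ω} (h₀ : IsAEPartition γ₀ S)
    (h₁ : IsAEPartition γ₁ S) (hS : ∀ i, γ₁ (S i) = γ₀ (S i)) {f : Ω → ℝ}
    (hf₀ : Integrable f γ₀) (hf₁ : Integrable f γ₁) {η : ℝ}
    (hη : ∀ i, ∀ x ∈ S i, ∀ y ∈ S i, |f x - f y| ≤ η) :
    ∫ x, f x ∂γ₁ ≤ ∫ x, f x ∂γ₀ + 2 * η * γ₀.real univ := by
  have hcell : ∀ i, ∫ x in S i, f x ∂γ₁ ≤ ∫ x in S i, f x ∂γ₀ + 2 * η * γ₀.real (S i) := by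
    intro i
    rcases (S i).eq_empty_or_nonempty with h | ⟨y, hy⟩
    · simp [h]
    have e₁ := abs_setIntegral_sub_mul_le hf₁.integrableOn fun x hx => hη i x hx y hy
    have e₀ := abs_setIntegral_sub_mul_le hf₀.integrableOn fun x hx => hη i x hx y hy
    rw [measureReal_def, hS i, ← measureReal_def] at e₁
    rw [abs_le] at e₁ e₀
    linarith [e₁.2, e₀.1]
  rw [h₁.integral_eq_sum hf₁, h₀.integral_eq_sum hf₀, ← h₀.sum_measureReal, Finset.mul_sum,
    ← Finset.sum_add_distrib]
  exact Finset.sum_le_sum fun i _ => hcell i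

theorem entCost_le_integral_add [Fintype ι] [Fintype κ] {μ : Measure α} {ν : Measure β}
    [IsProbabilityMeasure μ] [IsProbabilityMeasure ν] {γ₀ : Measure (α × β)}
    [IsProbabilityMeasure γ₀] (hγ₁ : γ₀.fst = μ) (hγ₂ : γ₀.snd = ν) {P : ι → Set α}
    {Q : κ → Set β} (hP : IsAEPartition μ P) (hQ : IsAEPartition ν Q) {c : α × β → ℝ}
    (hc : ∀ γ : Measure (α × β), γ.fst = μ → γ.snd = ν → Integrable c γ) {η : ℝ}
    (hη : ∀ p : ι × κ, ∀ z ∈ P p.1 ×ˢ Q p.2, ∀ w ∈ P p.1 ×ˢ Q p.2, |c z - c w| ≤ η)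
    {ε : ℝ} (hε : 0 ≤ ε) :
    entCost μ ν c ε ≤ ((∫ z, c z ∂γ₀ + 2 * η
      + ε * min (log (Fintype.card ι)) (log (Fintype.card κ)) : ℝ) : EReal) := by
  set γ₁ := blockApprox γ₀ μ ν P Q
  have h₁fst : γ₁.fst = μ := fst_blockApprox hγ₁ hγ₂ hP hQ
  have h₁snd : γ₁.snd = ν := snd_blockApprox hγ₁ hγ₂ hP hQ
  have := isProbabilityMeasure_of_fst_eq h₁fst
  have hcells₀ := IsAEPartition.prod (γ := γ₀) (hγ₁ ▸ hP) (hγ₂ ▸ hQ)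
  have hcells₁ := IsAEPartition.prod (γ := γ₁) (h₁fst ▸ hP) (h₁snd ▸ hQ)
  set a : ι × κ → ℝ := fun p => γ₀.real (P p.1 ×ˢ Q p.2)
  have hrow : ∀ i, ∑ j, a (i, j) = μ.real (P i) := fun i => by
    simp only [a, measureReal_def, ← ENNReal.toReal_sum fun j _ => measure_ne_top γ₀ _,
      Measure.sum_measure_prod_right (hγ₂ ▸ hQ) (hP.measurableSet i), hγ₁]
  have hcol : ∀ j, ∑ i, a (i, j) = ν.real (Q j) := fun j => by
    simp only [a, measureReal_def, ← ENNReal.toReal_sum fun i _ => measure_ne_top γ₀ _,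
      Measure.sum_measure_prod_left (hγ₁ ▸ hP) (hQ.measurableSet j), hγ₂]
  have ha : ∀ p, 0 ≤ a p := fun p => measureReal_nonneg
  have ha1 : ∑ p, a p = 1 := by rw [hcells₀.sum_measureReal, probReal_univ]
  have hEnt : Ent γ₁ (μ.prod ν)
      = ((∑ p, a p * log (a p / ((∑ j, a (p.1, j)) * ∑ i, a (i, p.2))) : ℝ) : EReal) := by
    simp only [Ent_blockApprox hP hQ, hrow, hcol, γ₁, a]
  have hent : ∑ p, a p * log (a p / ((∑ j, a (p.1, j)) * ∑ i, a (i, p.2)))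
      ≤ min (log (Fintype.card ι)) (log (Fintype.card κ)) :=
    le_min (Real.sum_mul_log_div_le_log_card_left ha ha1)
      (Real.sum_mul_log_div_le_log_card_right ha ha1)
  have hcost : ∫ z, c z ∂γ₁ ≤ ∫ z, c z ∂γ₀ + 2 * η := by
    simpa using integral_le_integral_add_of_forall_abs_sub_le hcells₀ hcells₁
      (blockApprox_apply_cell hγ₁ hγ₂ hP hQ) (hc γ₀ hγ₁ hγ₂) (hc γ₁ h₁fst h₁snd) hη
  calc entCost μ ν c ε ≤ ((∫ z, c z ∂γ₁ : ℝ) : EReal) + (ε : EReal) * Ent γ₁ (μ.prod ν) :=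
        sInf_le ⟨γ₁, inferInstance, h₁fst, h₁snd, rfl⟩
    _ ≤ _ := by
      rw [hEnt, ← EReal.coe_mul, ← EReal.coe_add, EReal.coe_le_coe_iff]
      linarith [mul_le_mul_of_nonneg_left hent hε]

theorem entCost_le_entCost_zero_add {μ : Measure α} {ν : Measure β} {c : α × β → ℝ} {ε q : ℝ}
    (h : ∀ γ : Measure (α × β), IsProbabilityMeasure γ → γ.fst = μ → γ.snd = ν →
      entCost μ ν c ε ≤ ((∫ z, c z ∂γ + q : ℝ) : EReal)) :
    entCost μ ν c ε ≤ entCost μ ν c 0 + q := by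
  rw [← EReal.sub_le_iff_le_add (.inl (EReal.coe_ne_bot q)) (.inl (EReal.coe_ne_top q))]
  refine le_sInf ?_
  rintro _ ⟨γ, hγ, h₁, h₂, rfl⟩
  rw [EReal.sub_le_iff_le_add (.inl (EReal.coe_ne_bot q)) (.inl (EReal.coe_ne_top q)),
    EReal.coe_zero, zero_mul, add_zero, ← EReal.coe_add]
  exact h γ hγ h₁ h₂

end MeasureTheory

lemma msupport_eq_support {X : Type*} [TopologicalSpace X] [MeasurableSpace X] (μ : Measure X) :
    msupport μ = μ.support := by
  ext x
  simp only [msupport, Measure.support_eq_forall_isOpen, mem_ofPred_eq, pos_iff_ne_zero]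
  exact forall_congr' fun U => ⟨fun h hx hU => h hU hx, fun h hU hx => h hx hU⟩

lemma LipschitzOnWith.abs_sub_le_of_mem_prod {X Y : Type*} [PseudoMetricSpace X]
    [PseudoMetricSpace Y] {f : X × Y → ℝ} {L : ℝ≥0} {s : Set X} {t : Set Y}
    (hf : LipschitzOnWith L f (s ×ˢ t)) {A : Set X} {B : Set Y} (hA : A ⊆ s) (hB : B ⊆ t)
    {δ : ℝ} (hδ : 0 ≤ δ) (hAδ : Metric.ediam A ≤ ENNReal.ofReal δ)
    (hBδ : Metric.ediam B ≤ ENNReal.ofReal δ) :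
    ∀ z ∈ A ×ˢ B, ∀ w ∈ A ×ˢ B, |f z - f w| ≤ L * δ := by
  intro z hz w hw
  rw [← Real.dist_eq]
  refine (hf.dist_le_mul z ⟨hA hz.1, hB hz.2⟩ w ⟨hA hw.1, hB hw.2⟩).trans
    (mul_le_mul_of_nonneg_left ?_ L.coe_nonneg)
  rw [Prod.dist_eq]
  exact max_le ((edist_le_ofReal hδ).1 ((Metric.edist_le_ediam_of_mem hz.1 hw.1).trans hAδ))
    ((edist_le_ofReal hδ).1 ((Metric.edist_le_ediam_of_mem hz.2 hw.2).trans hBδ))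

lemma ContinuousOn.integrable_of_fst_eq_of_snd_eq {X Y : Type*} [TopologicalSpace X]
    [TopologicalSpace Y] [T2Space X] [T2Space Y] [MeasurableSpace X] [MeasurableSpace Y]
    [OpensMeasurableSpace (X × Y)] {μ : Measure X} {ν : Measure Y} [IsProbabilityMeasure μ]
    {K₁ : Set X} {K₂ : Set Y} (hK₁ : IsCompact K₁) (hK₂ : IsCompact K₂) (hμ : ∀ᵐ x ∂μ, x ∈ K₁)
    (hν : ∀ᵐ y ∂ν, y ∈ K₂) {f : X × Y → ℝ} (hf : ContinuousOn f (K₁ ×ˢ K₂))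
    {γ : Measure (X × Y)} (h₁ : γ.fst = μ) (h₂ : γ.snd = ν) : Integrable f γ := by
  have := isProbabilityMeasure_of_fst_eq h₁
  have hγ : ∀ᵐ z ∂γ, z ∈ K₁ ×ˢ K₂ := by
    filter_upwards [ae_of_ae_map measurable_fst.aemeasurable (h₁ ▸ hμ : ∀ᵐ x ∂γ.fst, x ∈ K₁),
      ae_of_ae_map measurable_snd.aemeasurable (h₂ ▸ hν : ∀ᵐ y ∂γ.snd, y ∈ K₂)] with z hz₁ hz₂
      using ⟨hz₁, hz₂⟩
  have := hf.integrableOn_compact (μ := γ) (hK₁.prod hK₂)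
  rwa [IntegrableOn, Measure.restrict_eq_self_of_ae_mem hγ] at this

lemma Fin.pos_of_subset_iUnion {X : Type*} {n : ℕ} {K : Set X} (hK : K.Nonempty)
    {A : Fin n → Set X} (hA : K ⊆ ⋃ i, A i) : 0 < n :=
  (mem_iUnion.1 (hA hK.some_mem)).choose.pos

theorem entCost_upper_bound_box_dimension_general {d : ℕ}
    (μm μp : Measure (EuclideanSpace ℝ (Fin d)))
    [IsProbabilityMeasure μm] [IsProbabilityMeasure μp]
    (hXm : IsCompact (msupport μm)) (hXp : IsCompact (msupport μp))
    (c : EuclideanSpace ℝ (Fin d) × EuclideanSpace ℝ (Fin d) → ℝ)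
    (L : ℝ≥0) (hc : LipschitzOnWith L c (msupport μm ×ˢ msupport μp))
    (C km kp : ℝ)
    (hcovm : ∀ δ ∈ Set.Ioo (0 : ℝ) 1, ∃ (n : ℕ) (A : Fin n → Set (EuclideanSpace ℝ (Fin d))),
      (n : ℝ) ≤ C * δ ^ (-km) ∧ msupport μm ⊆ ⋃ i, A i ∧
      ∀ i, EMetric.diam (A i) ≤ ENNReal.ofReal δ)
    (hcovp : ∀ δ ∈ Set.Ioo (0 : ℝ) 1, ∃ (n : ℕ) (A : Fin n → Set (EuclideanSpace ℝ (Fin d))),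
      (n : ℝ) ≤ C * δ ^ (-kp) ∧ msupport μp ⊆ ⋃ i, A i ∧
      ∀ i, EMetric.diam (A i) ≤ ENNReal.ofReal δ) :
    ∃ M : ℝ, 0 ≤ M ∧ ∀ ε ∈ Set.Ioo (0 : ℝ) 1,
      entCost μm μp c ε ≤ entCost μm μp c 0
        + ((min km kp * (ε * Real.log (1 / ε)) + M * ε : ℝ) : EReal) := by
  simp only [msupport_eq_support] at hXm hXp hc hcovm hcovp
  have hKm : ∀ᵐ x ∂μm, x ∈ μm.support := Measure.support_mem_ae
  have hKp : ∀ᵐ x ∂μp, x ∈ μp.support := Measure.support_mem_ae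
  refine ⟨2 * L + max (log C) 0, by positivity, fun ε hε =>
    entCost_le_entCost_zero_add fun γ₀ _ hγ₁ hγ₂ => ?_⟩
  obtain ⟨n, A, hn, hAcov, hAdiam⟩ := hcovm ε hε
  obtain ⟨m, B, hm, hBcov, hBdiam⟩ := hcovp ε hε
  obtain ⟨P, hP, hPA⟩ :=
    exists_isAEPartition_of_subset_iUnion Measure.isClosed_support.measurableSet hKm hAcov
  obtain ⟨Q, hQ, hQB⟩ :=
    exists_isAEPartition_of_subset_iUnion Measure.isClosed_support.measurableSet hKp hBcov
  have hosc : ∀ p : Fin n × Fin m, ∀ z ∈ P p.1 ×ˢ Q p.2, ∀ w ∈ P p.1 ×ˢ Q p.2,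
      |c z - c w| ≤ L * ε := fun p => hc.abs_sub_le_of_mem_prod (hPA p.1).1 (hQB p.2).1 hε.1.le
    ((hPA p.1).2.trans (hAdiam p.1)) ((hQB p.2).2.trans (hBdiam p.2))
  have hlog := min_log_le_log_add_min_mul_log_one_div
    (Nat.cast_pos.2 (Fin.pos_of_subset_iUnion (Measure.nonempty_support (NeZero.ne μm)) hAcov))
    (Nat.cast_pos.2 (Fin.pos_of_subset_iUnion (Measure.nonempty_support (NeZero.ne μp)) hBcov))
    hε hn hm
  calc entCost μm μp c ε
      ≤ ((∫ z, c z ∂γ₀ + 2 * (L * ε) + ε * min (log n) (log m) : ℝ) : EReal) := by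
        simpa using entCost_le_integral_add hγ₁ hγ₂ hP hQ
          (fun γ => hc.continuousOn.integrable_of_fst_eq_of_snd_eq hXm hXp hKm hKp) hosc hε.1.le
    _ ≤ _ := by
      rw [EReal.coe_le_coe_iff]
      linarith [mul_le_mul_of_nonneg_left hlog hε.1.le,
        mul_le_mul_of_nonneg_left (le_max_left (log C) 0) hε.1.le]

/-- Upper bound for Lipschitz costs when the supports have box-counting exponents `k⁻, k⁺`:
`v_ε ≤ v₀ + min(k⁻,k⁺) ε log(1/ε) + M ε` on `(0,1)`. -/
theorem entCost_upper_bound_box_dimension {d : ℕ}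
    (μm μp : Measure (EuclideanSpace ℝ (Fin d)))
    [IsProbabilityMeasure μm] [IsProbabilityMeasure μp]
    (hXm : IsCompact (msupport μm)) (hXp : IsCompact (msupport μp))
    (c : EuclideanSpace ℝ (Fin d) × EuclideanSpace ℝ (Fin d) → ℝ)
    (L : ℝ≥0) (hc : LipschitzOnWith L c (msupport μm ×ˢ msupport μp))
    (C km kp : ℝ) (hC : 0 < C) (hkm : 0 ≤ km) (hkp : 0 ≤ kp)
    (hcovm : ∀ δ ∈ Set.Ioo (0 : ℝ) 1, ∃ (n : ℕ) (A : Fin n → Set (EuclideanSpace ℝ (Fin d))),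
      (n : ℝ) ≤ C * δ ^ (-km) ∧ msupport μm ⊆ ⋃ i, A i ∧
      ∀ i, EMetric.diam (A i) ≤ ENNReal.ofReal δ)
    (hcovp : ∀ δ ∈ Set.Ioo (0 : ℝ) 1, ∃ (n : ℕ) (A : Fin n → Set (EuclideanSpace ℝ (Fin d))),
      (n : ℝ) ≤ C * δ ^ (-kp) ∧ msupport μp ⊆ ⋃ i, A i ∧
      ∀ i, EMetric.diam (A i) ≤ ENNReal.ofReal δ) :
    ∃ M : ℝ, 0 ≤ M ∧ ∀ ε ∈ Set.Ioo (0 : ℝ) 1,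
      entCost μm μp c ε ≤ entCost μm μp c 0
        + ((min km kp * (ε * Real.log (1 / ε)) + M * ε : ℝ) : EReal) :=
  entCost_upper_bound_box_dimension_general μm μp hXm hXp c L hc C km kp hcovm hcovp
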